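/- Let k ≥ 1 and let G be a k-tree on at least k+3 vertices with toughness greater than k/3. Then G has a twig. Moreover, if v is a twig of G with bud S, then G − S is a k-tree of toughness greater than k/3, and in addition, if k ≥ 2, then S is a squeeze by v. -/

import Mathlib

open SimpleGraph

/-- `t < toughness of G`: for every vertex cut `X` (a set whose removal leaves
more than one connected component), `t * (number of components of G - X) < |X|`. -/
def SimpleGraph.ToughnessGT {V : Type*} [Fintype V] (G : SimpleGraph V) (t : ℝ) : Prop :=
  ∀ X : Set V, 1 < Nat.card (G.induce Xᶜ).ConnectedComponent →
    t * Nat.card (G.induce Xᶜ).ConnectedComponent < X.ncard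

/-- `G` is `t`-tough: for every vertex cut `X`, `t * (number of components) ≤ |X|`. -/
def SimpleGraph.ToughGE {V : Type*} [Fintype V] (G : SimpleGraph V) (t : ℝ) : Prop :=
  ∀ X : Set V, 1 < Nat.card (G.induce Xᶜ).ConnectedComponent →
    t * Nat.card (G.induce Xᶜ).ConnectedComponent ≤ X.ncard

/-- `G` is a `k`-tree: it can be built from `K_k` by repeatedly adding a vertex
whose neighbourhood among the previously added vertices is a `k`-clique. -/
def SimpleGraph.IsKTree {V : Type*} [Fintype V] (k : ℕ) (G : SimpleGraph V) : Prop :=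
  k ≤ Fintype.card V ∧
    ∃ e : V ≃ Fin (Fintype.card V),
      ∀ v : V, G.IsClique {w : V | G.Adj v w ∧ e w < e v} ∧
        Set.ncard {w : V | G.Adj v w ∧ e w < e v} = min (e v : ℕ) k

/-- The bud of a vertex `v` in a `k`-tree: its neighbours of degree `k`. -/
def SimpleGraph.bud {V : Type*} (G : SimpleGraph V) (k : ℕ) (v : V) : Set V :=
  {w : V | G.Adj v w ∧ (G.neighborSet w).ncard = k}

/-- `v` is a twig of the `k`-tree `G`: `v` is not universal, the set `S` of its
neighbours of degree `k` is nonempty, and `N(v) \ S` induces `K_k`. -/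
def SimpleGraph.IsTwig {V : Type*} (G : SimpleGraph V) (k : ℕ) (v : V) : Prop :=
  (∃ w, w ≠ v ∧ ¬ G.Adj v w) ∧ (G.bud k v).Nonempty ∧
    G.IsClique (G.neighborSet v \ G.bud k v) ∧ (G.neighborSet v \ G.bud k v).ncard = k

/-- `S` is a squeeze by `v`. -/
def SimpleGraph.IsSqueeze {V : Type*} (G : SimpleGraph V) (v : V) (S : Set V) : Prop :=
  S ⊆ G.neighborSet v ∧ 1 ≤ S.ncard ∧ S.ncard ≤ 2 ∧
    2 ≤ (G.neighborSet v \ S).ncard ∧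
    (∀ s ∈ S, (G.neighborSet v \ S).ncard - 1 ≤ ((G.neighborSet v \ S) ∩ G.neighborSet s).ncard) ∧
    (∀ r ∈ G.neighborSet v \ S, S.ncard - 1 ≤ (S ∩ G.neighborSet r).ncard)

/-- A chordal graph: every cycle of length at least 4 has a chord, i.e. an edge of `G`
between two vertices of the cycle that is not an edge of the cycle. -/
def SimpleGraph.IsChordal {V : Type*} (G : SimpleGraph V) : Prop :=
  ∀ (v : V) (c : G.Walk v v), c.IsCycle → 4 ≤ c.length →
    ∃ x y, x ∈ c.support ∧ y ∈ c.support ∧ G.Adj x y ∧ s(x, y) ∉ c.edges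

/-- `H` is a minor of `G`, witnessed by branch sets. -/
def SimpleGraph.HasMinor {V W : Type*} (G : SimpleGraph V) (H : SimpleGraph W) : Prop :=
  ∃ f : W → Set V, (∀ w, (f w).Nonempty) ∧ (∀ w, (G.induce (f w)).Connected) ∧
    (Pairwise (Function.onFun Disjoint f)) ∧
    ∀ w₁ w₂, H.Adj w₁ w₂ → ∃ a ∈ f w₁, ∃ b ∈ f w₂, G.Adj a b

/-- Planarity, via Wagner's theorem: no `K₅` or `K_{3,3}` minor. -/
def SimpleGraph.IsPlanar {V : Type*} (G : SimpleGraph V) : Prop :=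
  ¬ G.HasMinor (completeGraph (Fin 5)) ∧ ¬ G.HasMinor (completeBipartiteGraph (Fin 3) (Fin 3))

/-- `G` is `k`-connected. -/
def SimpleGraph.IsKConnected {V : Type*} [Fintype V] (k : ℕ) (G : SimpleGraph V) : Prop :=
  k + 1 ≤ Fintype.card V ∧ ∀ X : Set V, X.ncard < k → (G.induce Xᶜ).Connected

/-- The square of a graph: two vertices are adjacent iff their distance is 1 or 2. -/
def SimpleGraph.square {V : Type*} (G : SimpleGraph V) : SimpleGraph V where
  Adj v w := v ≠ w ∧ (G.Adj v w ∨ ∃ u, G.Adj v u ∧ G.Adj u w)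
  symm := by
    constructor
    rintro v w ⟨hne, h | ⟨u, h1, h2⟩⟩
    · exact ⟨hne.symm, Or.inl h.symm⟩
    · exact ⟨hne.symm, Or.inr ⟨u, h2.symm, h1.symm⟩⟩
  loopless := by constructor; rintro v ⟨hne, -⟩; exact hne rfl

/-- `G` is Hamilton-connected. -/
def SimpleGraph.IsHamiltonConnected {V : Type*} (G : SimpleGraph V) : Prop :=
  ∀ x y : V, x ≠ y → ∃ p : G.Walk x y, p.IsPath ∧ ∀ w, w ∈ p.support

/-!
Fix an ordering `e` witnessing that `G` is a `k`-tree; its first `k + 1` vertices form a clique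
`Q`. A vertex of degree `k` is simplicial, its later neighbours lie in `Q`, and two such vertices
are never adjacent. Hence any set of degree-`k` vertices can be deleted keeping the order `e`, and
deleting an independent set of simplicial vertices never splits a component of any `G - X`, so
the toughness bound is inherited.

Toughness `> k / 3` enters by counting components: when `n ≥ k + 3`, no set of at most `k`
vertices isolates two vertices. For the last vertex `v` of degree `≠ k`, this forces `e v ≥ k`,
the later neighbours of `v` to form its bud and its earlier ones the clique `N(v) \ S`, so `v` is
a twig unless it is universal. In that case every vertex beyond `Q` is attached to `Q` minus one
vertex, and such a missed vertex is a twig. For a twig, distinct bud vertices miss distinct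
vertices of `N(v) \ S`, which gives the squeeze; for `k ≥ 3` three bud vertices would let
`N[v] \ S`, of size `k + 1`, leave four components.
-/

namespace SimpleGraph

variable {V : Type*} {G : SimpleGraph V} {k : ℕ}

theorem eq_of_reachable_of_forall_not_adj {H : SimpleGraph V} {a b : V}
    (ha : ∀ w, ¬ H.Adj a w) (h : H.Reachable a b) : a = b := by
  obtain ⟨p⟩ := h
  cases p with
  | nil => rfl
  | cons hadj _ => exact absurd hadj (ha _)

theorem ncard_add_one_le_card_connectedComponent [Finite V] {H : SimpleGraph V} {A : Set V}
    (hA : ∀ a ∈ A, ∀ w, ¬ H.Adj a w) {c : V} (hc : c ∉ A) :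
    A.ncard + 1 ≤ Nat.card H.ConnectedComponent := by
  have hinj : Function.Injective fun x : ↥(insert c A) => H.connectedComponentMk x := by
    rintro ⟨x, hx⟩ ⟨y, hy⟩ hxy
    rw [ConnectedComponent.eq] at hxy
    refine Subtype.ext ?_
    by_cases hxA : x ∈ A
    · exact eq_of_reachable_of_forall_not_adj (hA x hxA) hxy
    by_cases hyA : y ∈ A
    · exact (eq_of_reachable_of_forall_not_adj (hA y hyA) hxy.symm).symm
    exact ((Set.mem_insert_iff.1 hx).resolve_right hxA).trans
      ((Set.mem_insert_iff.1 hy).resolve_right hyA).symm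
  have := Nat.card_le_card_of_injective _ hinj
  rwa [Nat.card_coe_set_eq, Set.ncard_insert_of_notMem hc] at this

theorem reachable_induce_sdiff {T S : Set V} (hS : G.IsIndepSet S)
    (hsimp : ∀ s ∈ S, G.IsClique (G.neighborSet s)) {u w : V} (hu : u ∈ T \ S) (hw : w ∈ T \ S)
    (h : (G.induce T).Reachable ⟨u, hu.1⟩ ⟨w, hw.1⟩) :
    (G.induce (T \ S)).Reachable ⟨u, hu⟩ ⟨w, hw⟩ := by
  -- A walk through `s ∈ S` enters and leaves `s` via two neighbours of `s`, which are adjacent.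
  suffices key : ∀ {a b : ↥T} (p : (G.induce T).Walk a b) (hb : b.1 ∉ S) (x : V)
      (hx : x ∈ T \ S), (x = a ∨ (a.1 ∈ S ∧ G.Adj x a)) →
      (G.induce (T \ S)).Reachable ⟨x, hx⟩ ⟨b, b.2, hb⟩ from
    h.elim fun p => key p hw.2 u hu (Or.inl rfl)
  intro a b p
  induction p with
  | nil =>
    rintro hb x hx (rfl | ⟨haS, -⟩)
    · rfl
    · exact absurd haS hb
  | @cons a m b hadj p ih =>
    rintro hb x hx (hxa | ⟨haS, hxa⟩)
    · by_cases hm : m.1 ∈ S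
      · exact ih hb x hx (Or.inr ⟨hm, hxa ▸ hadj⟩)
      · exact (Adj.reachable (G := G.induce (T \ S)) (u := ⟨x, hx⟩) (v := ⟨m, m.2, hm⟩)
          (hxa ▸ hadj)).trans (ih hb m ⟨m.2, hm⟩ (Or.inl rfl))
    · have hm : m.1 ∉ S := fun hm => hS haS hm (G.ne_of_adj hadj) hadj
      by_cases hxm : x = m
      · exact ih hb x hx (Or.inl hxm)
      · exact (Adj.reachable (G := G.induce (T \ S)) (u := ⟨x, hx⟩) (v := ⟨m, m.2, hm⟩)
          (hsimp a haS hxa.symm hadj hxm)).trans (ih hb m ⟨m.2, hm⟩ (Or.inl rfl))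

theorem ncard_setOf_val_lt {n m : ℕ} (e : V ≃ Fin n) (hm : m ≤ n) :
    {w | (e w : ℕ) < m}.ncard = m := by
  rw [← Set.ncard_image_of_injective _ e.injective]
  have : e '' {w | (e w : ℕ) < m} = Set.range (Fin.castLE hm) := by
    ext i
    constructor
    · rintro ⟨w, hw, rfl⟩
      exact ⟨⟨_, hw⟩, rfl⟩
    · rintro ⟨j, rfl⟩
      exact ⟨e.symm (Fin.castLE hm j), by simp, by simp⟩
  rw [this, ← Set.image_univ, Set.ncard_image_of_injective _ (Fin.castLE_injective hm)]
  simp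

theorem ncard_setOf_val_le {n m : ℕ} (e : V ≃ Fin n) (hm : m < n) :
    {w | (e w : ℕ) ≤ m}.ncard = m + 1 := by
  simpa [Nat.lt_succ_iff] using ncard_setOf_val_lt e (m := m + 1) hm

theorem ncard_setOf_lt {n : ℕ} (e : V ≃ Fin n) (v : V) : {w | e w < e v}.ncard = e v :=
  ncard_setOf_val_lt e (e v).isLt.le

def earlierNeighborSet {n : ℕ} (G : SimpleGraph V) (e : V ≃ Fin n) (v : V) : Set V :=
  {w | G.Adj v w ∧ e w < e v}

def IsKTreeOrder {n : ℕ} (k : ℕ) (G : SimpleGraph V) (e : V ≃ Fin n) : Prop :=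
  ∀ v, G.IsClique (G.earlierNeighborSet e v) ∧
    (G.earlierNeighborSet e v).ncard = min (e v : ℕ) k

theorem isKTree_of_injective {W β : Type*} [Fintype W] [LinearOrder β] {H : SimpleGraph W}
    (f : W → β) (hf : Function.Injective f) (hk : k ≤ Fintype.card W)
    (hH : ∀ v, H.IsClique {w | H.Adj v w ∧ f w < f v} ∧
      {w | H.Adj v w ∧ f w < f v}.ncard = min {w | f w < f v}.ncard k) :
    H.IsKTree k := by
  let : LinearOrder W := LinearOrder.lift' f hf
  let e : W ≃o Fin (Fintype.card W) := (Fintype.orderIsoFinOfCardEq W rfl).symm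
  have hlt : ∀ v w, e w < e v ↔ f w < f v := fun v w => e.lt_iff_lt
  refine ⟨hk, e.toEquiv, fun v => ?_⟩
  obtain ⟨hclique, hcard⟩ := hH v
  simp_rw [← hlt] at hclique hcard
  rw [show {w | e w < e v}.ncard = e v from ncard_setOf_lt e.toEquiv v] at hcard
  exact ⟨hclique, hcard⟩

variable [Fintype V]

theorem isKTree_iff :
    G.IsKTree k ↔ k ≤ Fintype.card V ∧ ∃ e : V ≃ Fin (Fintype.card V), G.IsKTreeOrder k e :=
  Iff.rfl

theorem ToughnessGT.mul_ncard_add_one_lt {t : ℝ} (ht : G.ToughnessGT t) (h0 : 0 ≤ t)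
    {X A : Set V} (hA : A.Nonempty) (hAX : Disjoint A X) (hiso : ∀ a ∈ A, G.neighborSet a ⊆ X)
    {c : V} (hcX : c ∉ X) (hcA : c ∉ A) : t * (A.ncard + 1) < X.ncard := by
  set A' : Set ↥Xᶜ := Subtype.val ⁻¹' A
  have hA' : A'.ncard = A.ncard := Set.ncard_preimage_of_injective_subset_range
    Subtype.val_injective fun a ha => ⟨⟨a, hAX.notMem_of_mem_left ha⟩, rfl⟩
  have hcomp := ncard_add_one_le_card_connectedComponent (H := G.induce Xᶜ) (A := A')
    (fun a ha w hw => w.2 (hiso a ha hw)) (c := ⟨c, hcX⟩) hcA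
  rw [hA'] at hcomp
  have hpos := (Set.ncard_pos (Set.toFinite A)).2 hA
  calc t * (A.ncard + 1) ≤ t * Nat.card (G.induce Xᶜ).ConnectedComponent := by
        gcongr
        exact_mod_cast hcomp
    _ < X.ncard := ht X (by omega)

theorem ToughnessGT.false_of_two_isolated (ht : G.ToughnessGT ((k : ℝ) / 3))
    (hn : k + 3 ≤ Fintype.card V) {X : Set V} (hX : X.ncard ≤ k) {a b : V} (hab : a ≠ b)
    (ha : a ∉ X) (hb : b ∉ X) (hNa : G.neighborSet a ⊆ X) (hNb : G.neighborSet b ⊆ X) :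
    False := by
  obtain ⟨c, hc⟩ : ∃ c, c ∉ X ∪ {a, b} := by
    by_contra! h
    have := Set.ncard_union_le X {a, b}
    rw [Set.eq_univ_of_forall h, Set.ncard_univ, Nat.card_eq_fintype_card,
      Set.ncard_pair hab] at this
    omega
  have := ht.mul_ncard_add_one_lt (by positivity) (A := {a, b}) (X := X) ⟨a, Or.inl rfl⟩
    (Set.disjoint_left.2 (by rintro _ (rfl | rfl) <;> assumption))
    (by rintro _ (rfl | rfl) <;> assumption) (c := c) (fun h => hc (Or.inl h))
    (fun h => hc (Or.inr h))
  rw [Set.ncard_pair hab] at this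
  have : (X.ncard : ℝ) ≤ k := by exact_mod_cast hX
  linarith

theorem ToughnessGT.induce_compl {t : ℝ} (ht : G.ToughnessGT t) (h0 : 0 ≤ t) {S : Set V}
    [Fintype ↥Sᶜ] (hS : G.IsIndepSet S) (hsimp : ∀ s ∈ S, G.IsClique (G.neighborSet s)) :
    (G.induce Sᶜ).ToughnessGT t := by
  intro X hX
  set Y : Set V := Subtype.val '' X
  have hmem : ∀ x : ↥(Xᶜ : Set ↥Sᶜ), x.1.1 ∈ Yᶜ \ S := fun x =>
    ⟨fun ⟨y, hy, hxy⟩ => x.2 (Subtype.ext hxy ▸ hy), x.1.2⟩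
  let φ : (G.induce Sᶜ).induce Xᶜ →g G.induce Yᶜ := ⟨fun x => ⟨x.1.1, (hmem x).1⟩, id⟩
  let ψ : G.induce (Yᶜ \ S) →g (G.induce Sᶜ).induce Xᶜ :=
    ⟨fun x => ⟨⟨x.1, x.2.2⟩, fun hx => x.2.1 ⟨_, hx, rfl⟩⟩, id⟩
  have hinj : Function.Injective (ConnectedComponent.map φ) := by
    refine ConnectedComponent.ind₂ fun a b hab => ?_
    rw [ConnectedComponent.map_mk, ConnectedComponent.map_mk, ConnectedComponent.eq] at hab
    exact ConnectedComponent.eq.2 ((reachable_induce_sdiff hS hsimp (hmem a) (hmem b) hab).map ψ)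
  have hcard := Nat.card_le_card_of_injective _ hinj
  calc t * Nat.card ((G.induce Sᶜ).induce Xᶜ).ConnectedComponent
      ≤ t * Nat.card (G.induce Yᶜ).ConnectedComponent := by gcongr
    _ < Y.ncard := ht Y (hX.trans_le hcard)
    _ = X.ncard := by rw [Set.ncard_image_of_injective _ Subtype.val_injective]

namespace IsKTreeOrder

variable {e : V ≃ Fin (Fintype.card V)} (hG : G.IsKTreeOrder k e)
include hG

theorem earlierNeighborSet_eq_of_le {v : V} (hv : (e v : ℕ) ≤ k) :
    G.earlierNeighborSet e v = {w | e w < e v} := by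
  refine Set.eq_of_subset_of_ncard_le (fun w hw => hw.2) ?_
  rw [ncard_setOf_lt, (hG v).2, min_eq_left hv]

theorem isClique_setOf_le : G.IsClique {w | (e w : ℕ) ≤ k} := by
  intro u hu w hw hne
  rcases lt_or_gt_of_ne (e.injective.ne hne) with h | h
  · have : u ∈ G.earlierNeighborSet e w := by rw [hG.earlierNeighborSet_eq_of_le hw]; exact h
    exact this.1.symm
  · have : w ∈ G.earlierNeighborSet e u := by rw [hG.earlierNeighborSet_eq_of_le hu]; exact h
    exact this.1

theorem neighborSet_eq_earlierNeighborSet {v : V} (hd : (G.neighborSet v).ncard = k)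
    (hv : k ≤ (e v : ℕ)) : G.neighborSet v = G.earlierNeighborSet e v :=
  (Set.eq_of_subset_of_ncard_le (fun _ hw => hw.1) (by rw [hd, (hG v).2, min_eq_right hv])).symm

theorem neighborSet_eq_of_le {v : V} (hkn : k < Fintype.card V)
    (hd : (G.neighborSet v).ncard = k) (hv : (e v : ℕ) ≤ k) :
    G.neighborSet v = {w | (e w : ℕ) ≤ k} \ {v} := by
  refine (Set.eq_of_subset_of_ncard_le (fun w hw => ?_) ?_).symm
  · exact hG.isClique_setOf_le hv hw.1 (Ne.symm hw.2)
  · rw [hd, Set.ncard_sdiff_singleton_of_mem (show v ∈ {w | (e w : ℕ) ≤ k} from hv),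
      ncard_setOf_val_le e hkn]
    rfl

theorem isClique_neighborSet {v : V} (hkn : k < Fintype.card V)
    (hd : (G.neighborSet v).ncard = k) : G.IsClique (G.neighborSet v) := by
  rcases le_total k (e v) with hv | hv
  · rw [hG.neighborSet_eq_earlierNeighborSet hd hv]
    exact (hG v).1
  · rw [hG.neighborSet_eq_of_le hkn hd hv]
    exact hG.isClique_setOf_le.subset Set.sdiff_subset

theorem le_of_adj_of_lt {s v : V} (hkn : k < Fintype.card V)
    (hd : (G.neighborSet s).ncard = k) (hadj : G.Adj s v) (hlt : e s < e v) : (e v : ℕ) ≤ k := by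
  rcases le_total k (e s) with hs | hs
  · have : v ∈ G.earlierNeighborSet e s := hG.neighborSet_eq_earlierNeighborSet hd hs ▸ hadj
    exact absurd this.2 (not_lt.2 hlt.le)
  · have : v ∈ {w | (e w : ℕ) ≤ k} \ {s} := hG.neighborSet_eq_of_le hkn hd hs ▸ hadj
    exact this.1

theorem not_adj_of_ncard_eq (hk : 1 ≤ k) (hn : k + 2 ≤ Fintype.card V) {s t : V}
    (hs : (G.neighborSet s).ncard = k) (ht : (G.neighborSet t).ncard = k) : ¬ G.Adj s t := by
  intro hst
  have hkn : k < Fintype.card V := by omega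
  have hQ : ∀ {a b : V}, (G.neighborSet a).ncard = k → (G.neighborSet b).ncard = k →
      G.Adj a b → (e a : ℕ) ≤ k := by
    intro a b ha hb hab
    rcases lt_or_gt_of_ne (e.injective.ne hab.ne) with h | h
    · have := hG.le_of_adj_of_lt hkn ha hab h
      omega
    · exact hG.le_of_adj_of_lt hkn hb hab.symm h
  -- Both lie in `Q`, so the vertex right after `Q` has its `k` earlier neighbours in `Q \ {s, t}`.
  obtain ⟨z, hz⟩ : ∃ z, (e z : ℕ) = k + 1 := ⟨e.symm ⟨k + 1, by omega⟩, by simp⟩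
  have hsub : G.earlierNeighborSet e z ⊆ {w | (e w : ℕ) ≤ k} \ {s, t} := by
    rintro w ⟨hzw, hw⟩
    refine ⟨show (e w : ℕ) ≤ k by omega, ?_⟩
    rintro (rfl | rfl)
    · exact absurd (hG.le_of_adj_of_lt hkn hs hzw.symm hw) (by omega)
    · exact absurd (hG.le_of_adj_of_lt hkn ht hzw.symm hw) (by omega)
  have := Set.ncard_le_ncard hsub
  rw [(hG z).2, hz, min_eq_right (by omega), Set.ncard_sdiff (by
      rintro w (rfl | rfl)
      exacts [hQ hs ht hst, hQ ht hs hst.symm]), ncard_setOf_val_le e hkn,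
    Set.ncard_pair hst.ne] at this
  omega

theorem isKTree_induce_compl {S : Set V} [Fintype ↥Sᶜ]
    (hS : ∀ s ∈ S, ∀ v, G.Adj s v → e s < e v → (e v : ℕ) ≤ k)
    (hcard : k ≤ Fintype.card ↥Sᶜ) : (G.induce Sᶜ).IsKTree k := by
  -- The restriction of `e` still works: a vertex inside the initial clique is adjacent to every
  -- earlier vertex, and a vertex beyond it has no earlier neighbour in `S`.
  refine isKTree_of_injective (fun v : ↥Sᶜ => e v) (e.injective.comp Subtype.val_injective)
    hcard fun v => ?_
  set A := {w : ↥Sᶜ | (G.induce Sᶜ).Adj v w ∧ e w < e v}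
  have hrank : {w : ↥Sᶜ | e w < e v}.ncard ≤ e v := by
    rw [← ncard_setOf_lt e v.1, ← Set.ncard_image_of_injective _ Subtype.val_injective]
    exact Set.ncard_le_ncard (by rintro _ ⟨w, hw, rfl⟩; exact hw)
  by_cases hv : (e v : ℕ) ≤ k
  · have hA : A = {w : ↥Sᶜ | e w < e v} := by
      ext w
      refine ⟨And.right, fun hw => ⟨?_, hw⟩⟩
      have : w.1 ∈ G.earlierNeighborSet e v := by rw [hG.earlierNeighborSet_eq_of_le hv]; exact hw
      exact this.1
    rw [hA, min_eq_left (hrank.trans hv)]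
    refine ⟨fun a ha b hb hab => ?_, rfl⟩
    exact hG.isClique_setOf_le (show (e a.1 : ℕ) ≤ k by have : e a.1 < e v := ha; omega)
      (show (e b.1 : ℕ) ≤ k by have : e b.1 < e v := hb; omega) (Subtype.val_injective.ne hab)
  · have hA : Subtype.val '' A = G.earlierNeighborSet e v := by
      ext w
      refine ⟨by rintro ⟨w, hw, rfl⟩; exact hw, fun hw => ⟨⟨w, fun hwS => ?_⟩, hw, rfl⟩⟩
      exact hv (hS w hwS v hw.1.symm hw.2)
    have hAcard : A.ncard = k := by
      rw [← Set.ncard_image_of_injective _ Subtype.val_injective, hA, (hG v).2,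
        min_eq_right (by omega)]
    refine ⟨fun a ha b hb hab => ?_, ?_⟩
    · exact (hG v).1 (hA ▸ ⟨a, ha, rfl⟩) (hA ▸ ⟨b, hb, rfl⟩) (Subtype.val_injective.ne hab)
    · rw [hAcard, min_eq_right (hAcard ▸ Set.ncard_le_ncard fun w hw => hw.2)]

theorem neighborSet_subset_of_forall_gt (hk : 1 ≤ k) (hn : k + 2 ≤ Fintype.card V) {m : ℕ}
    {z : V} (hafter : ∀ w, m < (e w : ℕ) → (G.neighborSet w).ncard = k) (hz : m < (e z : ℕ)) :
    G.neighborSet z ⊆ {w | (e w : ℕ) ≤ m} := fun x hx => by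
  by_contra hxv
  exact hG.not_adj_of_ncard_eq hk hn (hafter z hz) (hafter x (not_le.1 hxv)) hx

theorem exists_ncard_neighborSet_ne (hk : 1 ≤ k) (hn : k + 2 ≤ Fintype.card V) :
    ∃ v, (G.neighborSet v).ncard ≠ k := by
  obtain ⟨u, hu⟩ : ∃ u, (e u : ℕ) = Fintype.card V - 1 :=
    ⟨e.symm ⟨Fintype.card V - 1, by omega⟩, by simp⟩
  obtain ⟨b, hb⟩ : (G.earlierNeighborSet e u).Nonempty := by
    rw [← Set.ncard_pos, (hG u).2]
    omega
  by_contra! h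
  exact hG.not_adj_of_ncard_eq hk hn (h u) (h b) hb.1

theorem exists_neighborSet_eq_sdiff (hk : 1 ≤ k) (hn : k + 2 ≤ Fintype.card V)
    (hafter : ∀ w, k < (e w : ℕ) → (G.neighborSet w).ncard = k)
    {w : V} (hw : k < (e w : ℕ)) :
    ∃ c ∈ {u | (e u : ℕ) ≤ k}, G.neighborSet w = {u | (e u : ℕ) ≤ k} \ {c} := by
  obtain ⟨c, hc, hins⟩ := (Set.exists_eq_insert_iff_ncard).2
    ⟨hG.neighborSet_subset_of_forall_gt hk hn hafter hw,
      by rw [hafter w hw, ncard_setOf_val_le e (by omega)]⟩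
  exact ⟨c, hins ▸ Set.mem_insert c _, by rw [← hins, Set.insert_sdiff_self_of_notMem hc]⟩

-- The bud of `c₁` consists of its neighbours beyond `Q`, and the rest of `N(c₁)` is `Q \ {c₁}`.
theorem isTwig_of_neighborSet_eq_sdiff (hkn : k < Fintype.card V)
    (hafter : ∀ w, k < (e w : ℕ) → (G.neighborSet w).ncard = k) {z₁ z₂ c₁ c₂ : V}
    (hz₁ : k < (e z₁ : ℕ)) (hz₂ : k < (e z₂ : ℕ)) (hc₁ : (e c₁ : ℕ) ≤ k)
    (hN₁ : G.neighborSet z₁ = {u | (e u : ℕ) ≤ k} \ {c₁})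
    (hN₂ : G.neighborSet z₂ = {u | (e u : ℕ) ≤ k} \ {c₂}) (hc : c₁ ≠ c₂) : G.IsTwig k c₁ := by
  have hC : G.neighborSet c₁ \ G.bud k c₁ = {u | (e u : ℕ) ≤ k} \ {c₁} := by
    ext x
    refine ⟨fun ⟨hx, hxb⟩ => ⟨?_, fun h => G.ne_of_adj hx h.symm⟩, fun ⟨hxQ, hxc⟩ => ⟨?_, ?_⟩⟩
    · by_contra h
      exact hxb ⟨hx, hafter x (not_le.1 h)⟩
    · exact hG.isClique_setOf_le hc₁ hxQ (Ne.symm hxc)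
    · rintro ⟨-, hxk⟩
      have : x ∈ G.neighborSet z₁ := hN₁ ▸ ⟨hxQ, hxc⟩
      have := hG.le_of_adj_of_lt hkn hxk this.symm (by have : (e x : ℕ) ≤ k := hxQ; omega)
      omega
  refine ⟨⟨z₁, fun h => ?_, fun h => ?_⟩, ⟨z₂, ?_, hafter z₂ hz₂⟩, ?_⟩
  · rw [← h] at hc₁
    omega
  · have : c₁ ∈ G.neighborSet z₁ := h.symm
    rw [hN₁] at this
    exact this.2 rfl
  · have : c₁ ∈ G.neighborSet z₂ := hN₂ ▸ ⟨hc₁, hc⟩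
    exact this.symm
  · rw [hC, Set.ncard_sdiff_singleton_of_mem (show c₁ ∈ {u | (e u : ℕ) ≤ k} from hc₁),
      ncard_setOf_val_le e hkn]
    exact ⟨hG.isClique_setOf_le.subset Set.sdiff_subset, rfl⟩

section

variable (hk : 1 ≤ k) (hn : k + 3 ≤ Fintype.card V) (ht : G.ToughnessGT ((k : ℝ) / 3))
include hk hn ht

theorem le_of_forall_gt {v : V} (hafter : ∀ w, (e v : ℕ) < e w → (G.neighborSet w).ncard = k) :
    k ≤ (e v : ℕ) := by
  by_contra! hv
  obtain ⟨z₁, hz₁⟩ : ∃ z, (e z : ℕ) = k + 1 := ⟨e.symm ⟨k + 1, by omega⟩, by simp⟩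
  obtain ⟨z₂, hz₂⟩ : ∃ z, (e z : ℕ) = k + 2 := ⟨e.symm ⟨k + 2, by omega⟩, by simp⟩
  have hX := ncard_setOf_val_le e (m := e v) (by omega)
  refine ht.false_of_two_isolated hn (X := {w | (e w : ℕ) ≤ e v}) (by omega) (a := z₁) (b := z₂)
    (fun h => by rw [h] at hz₁; omega) (show ¬ (e z₁ : ℕ) ≤ e v by omega)
    (show ¬ (e z₂ : ℕ) ≤ e v by omega)
    (hG.neighborSet_subset_of_forall_gt hk (by omega) hafter (by omega))
    (hG.neighborSet_subset_of_forall_gt hk (by omega) hafter (by omega))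

theorem ncard_neighborSet_ne_of_mem_earlierNeighborSet {v x b : V}
    (hafter : ∀ w, (e v : ℕ) < e w → (G.neighborSet w).ncard = k) (hx : e v < e x)
    (hb : b ∈ G.earlierNeighborSet e v) : (G.neighborSet b).ncard ≠ k := by
  intro hbk
  have hkv := hG.le_of_forall_gt hk hn ht hafter
  have hkb : (e b : ℕ) < k := by
    by_contra! hkb
    have : v ∈ G.earlierNeighborSet e b := by
      rw [← hG.neighborSet_eq_earlierNeighborSet hbk hkb]
      exact hb.1.symm
    exact absurd hb.2 (not_lt.2 this.2.le)
  have hNb := hG.neighborSet_eq_of_le (by omega) hbk hkb.le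
  have hvk : v ∈ G.neighborSet b := hb.1.symm
  rw [hNb] at hvk
  -- Deleting the initial clique minus `b` isolates both `b` and `x`.
  have hbx : ¬ G.Adj b x := fun h => absurd (hG.le_of_adj_of_lt (by omega) hbk h
    (hb.2.trans hx)) (by omega)
  refine ht.false_of_two_isolated hn (X := {w | (e w : ℕ) ≤ k} \ {b}) ?_ (a := b) (b := x)
    (fun h => (hb.2.trans hx).ne (congrArg e h)) (fun h => h.2 rfl)
    (fun h => by have : (e x : ℕ) ≤ k := h.1; omega) hNb.le
    fun y hy => ⟨?_, fun h => hbx ((Set.mem_singleton_iff.1 h) ▸ hy.symm)⟩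
  · rw [← hNb, hbk]
  · exact Nat.le_trans (hG.neighborSet_subset_of_forall_gt hk (by omega) hafter hx hy) hvk.1

theorem isTwig_of_forall_gt {v : V}
    (hafter : ∀ w, (e v : ℕ) < e w → (G.neighborSet w).ncard = k)
    (hv : (G.neighborSet v).ncard ≠ k) (huniv : ∃ w, w ≠ v ∧ ¬ G.Adj v w) : G.IsTwig k v := by
  have hkv := hG.le_of_forall_gt hk hn ht hafter
  obtain ⟨x, hvx, hx⟩ : ∃ x, G.Adj v x ∧ e v < e x := by
    by_contra! h
    have hN : G.neighborSet v = G.earlierNeighborSet e v := Set.ext fun w =>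
      ⟨fun hw => ⟨hw, (h w hw).lt_of_ne (e.injective.ne (G.ne_of_adj hw).symm)⟩, And.left⟩
    exact hv (by rw [hN, (hG v).2, min_eq_right hkv])
  have hC : G.neighborSet v \ G.bud k v = G.earlierNeighborSet e v := by
    ext w
    refine ⟨fun ⟨hw, hwb⟩ => ⟨hw, ?_⟩, fun hw => ⟨hw.1, fun hwb => ?_⟩⟩
    · by_contra! h
      have := e.injective.ne (G.ne_of_adj hw)
      exact hwb ⟨hw, hafter w (by omega)⟩
    · exact hG.ncard_neighborSet_ne_of_mem_earlierNeighborSet hk hn ht hafter hx hw hwb.2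
  refine ⟨huniv, ⟨x, hvx, hafter x hx⟩, ?_⟩
  rw [hC, (hG v).2, min_eq_right hkv]
  exact ⟨(hG v).1, rfl⟩

theorem exists_isTwig_of_forall_val_gt
    (hafter : ∀ w, k < (e w : ℕ) → (G.neighborSet w).ncard = k) : ∃ c, G.IsTwig k c := by
  obtain ⟨z₁, hz₁⟩ : ∃ z, (e z : ℕ) = k + 1 := ⟨e.symm ⟨k + 1, by omega⟩, by simp⟩
  obtain ⟨z₂, hz₂⟩ : ∃ z, (e z : ℕ) = k + 2 := ⟨e.symm ⟨k + 2, by omega⟩, by simp⟩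
  obtain ⟨c₁, hc₁, hN₁⟩ := hG.exists_neighborSet_eq_sdiff hk (by omega) hafter (w := z₁) (by omega)
  obtain ⟨c₂, -, hN₂⟩ := hG.exists_neighborSet_eq_sdiff hk (by omega) hafter (w := z₂) (by omega)
  refine ⟨c₁, hG.isTwig_of_neighborSet_eq_sdiff (by omega) hafter (by omega) (by omega) hc₁ hN₁ hN₂
    fun h => ?_⟩
  subst h
  refine ht.false_of_two_isolated hn (X := {u | (e u : ℕ) ≤ k} \ {c₁}) ?_
    (fun h => by rw [h] at hz₁; omega) (fun h => by have : (e z₁ : ℕ) ≤ k := h.1; omega)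
    (fun h => by have : (e z₂ : ℕ) ≤ k := h.1; omega) hN₁.le hN₂.le
  rw [← hN₁, hafter z₁ (by omega)]

end

end IsKTreeOrder

namespace IsKTree

variable (hG : G.IsKTree k)
include hG

theorem isClique_neighborSet (hkn : k < Fintype.card V) {v : V}
    (hd : (G.neighborSet v).ncard = k) : G.IsClique (G.neighborSet v) := by
  obtain ⟨-, e, hG⟩ := isKTree_iff.1 hG
  exact hG.isClique_neighborSet hkn hd

theorem isIndepSet_bud (hk : 1 ≤ k) (hn : k + 2 ≤ Fintype.card V) (v : V) :
    G.IsIndepSet (G.bud k v) := by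
  obtain ⟨-, e, hG⟩ := isKTree_iff.1 hG
  exact fun s hs t ht _ => hG.not_adj_of_ncard_eq hk hn hs.2 ht.2

theorem induce_compl {S : Set V} [Fintype ↥Sᶜ]
    (hS : ∀ s ∈ S, (G.neighborSet s).ncard = k) (hcard : k + S.ncard ≤ Fintype.card V) :
    (G.induce Sᶜ).IsKTree k := by
  obtain ⟨-, e, hG⟩ := isKTree_iff.1 hG
  refine hG.isKTree_induce_compl (fun s hs v => hG.le_of_adj_of_lt ?_ (hS s hs)) ?_
  · have := (Set.ncard_pos (Set.toFinite S)).2 ⟨s, hs⟩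
    omega
  · rw [Fintype.card_eq_nat_card, Nat.card_coe_set_eq, Set.ncard_compl, Nat.card_eq_fintype_card]
    omega

theorem exists_isTwig (hk : 1 ≤ k) (hn : k + 3 ≤ Fintype.card V)
    (ht : G.ToughnessGT ((k : ℝ) / 3)) : ∃ v, G.IsTwig k v := by
  classical
  obtain ⟨-, e, hG⟩ := isKTree_iff.1 hG
  obtain ⟨u, hu⟩ := hG.exists_ncard_neighborSet_ne hk (by omega)
  obtain ⟨v, hv, hmax⟩ := Finset.exists_max_image
    (Finset.univ.filter fun w => (G.neighborSet w).ncard ≠ k) (fun w => (e w : ℕ))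
    ⟨u, by simpa using hu⟩
  simp only [Finset.mem_filter, Finset.mem_univ, true_and] at hv hmax
  have hafter : ∀ w, (e v : ℕ) < e w → (G.neighborSet w).ncard = k := fun w hw => by
    by_contra h
    exact absurd (hmax w h) (not_le.2 hw)
  by_cases huniv : ∃ w, w ≠ v ∧ ¬ G.Adj v w
  · exact ⟨v, hG.isTwig_of_forall_gt hk hn ht hafter hv huniv⟩
  push Not at huniv
  have hvk : (e v : ℕ) ≤ k := by
    have hB : G.earlierNeighborSet e v = {w | e w < e v} := Set.ext fun w =>
      ⟨And.right, fun hw => ⟨huniv w fun h => (show e w < e v from hw).ne (congrArg e h), hw⟩⟩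
    have := (hG v).2
    rw [hB, ncard_setOf_lt] at this
    omega
  exact hG.exists_isTwig_of_forall_val_gt hk hn ht fun w hw => hafter w (by omega)

end IsKTree

omit [Fintype V] in
theorem notMem_insert_of_mem_bud {v s : V} (hs : s ∈ G.bud k v) :
    s ∉ insert v (G.neighborSet v \ G.bud k v) := by
  rintro (h | h)
  exacts [G.ne_of_adj hs.1 h.symm, h.2 hs]

namespace IsTwig

variable {v : V} (hv : G.IsTwig k v)
include hv

theorem exists_neighborSet_eq (hG : G.IsKTree k) (hk : 1 ≤ k) (hn : k + 2 ≤ Fintype.card V)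
    {s : V} (hs : s ∈ G.bud k v) : ∃ c ∈ G.neighborSet v \ G.bud k v,
      G.neighborSet s = insert v ((G.neighborSet v \ G.bud k v) \ {c}) := by
  have hvs : v ∈ G.neighborSet s := hs.1.symm
  have hsub : G.neighborSet s \ {v} ⊆ G.neighborSet v \ G.bud k v := fun x ⟨hx, hxv⟩ =>
    ⟨(hG.isClique_neighborSet (by omega) hs.2 hx hvs hxv).symm,
      fun hxb => hG.isIndepSet_bud hk hn v hs hxb (G.ne_of_adj hx) hx⟩
  obtain ⟨c, hc, hC⟩ := (Set.exists_eq_insert_iff_ncard).2 ⟨hsub, by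
    rw [Set.ncard_sdiff_singleton_of_mem hvs, hs.2, hv.2.2.2]
    omega⟩
  refine ⟨c, hC ▸ Set.mem_insert c _, ?_⟩
  rw [← hC, Set.insert_sdiff_self_of_notMem hc, Set.insert_sdiff_singleton,
    Set.insert_eq_of_mem hvs]

theorem eq_of_neighborSet_eq (hn : k + 3 ≤ Fintype.card V) (ht : G.ToughnessGT ((k : ℝ) / 3))
    {s t c : V} (hs : s ∈ G.bud k v) (hbt : t ∈ G.bud k v) (hc : c ∈ G.neighborSet v \ G.bud k v)
    (hsc : G.neighborSet s = insert v ((G.neighborSet v \ G.bud k v) \ {c}))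
    (htc : G.neighborSet t = insert v ((G.neighborSet v \ G.bud k v) \ {c})) : s = t := by
  by_contra hst
  have hX : (insert v ((G.neighborSet v \ G.bud k v) \ {c})).ncard ≤ k := by
    have := (Set.ncard_pos).2 ⟨c, hc⟩
    refine (Set.ncard_insert_le _ _).trans ?_
    rw [Set.ncard_sdiff_singleton_of_mem hc, hv.2.2.2] at *
    omega
  have hnot : ∀ u ∈ G.bud k v, u ∉ insert v ((G.neighborSet v \ G.bud k v) \ {c}) :=
    fun u hu h => notMem_insert_of_mem_bud hu (Set.insert_subset_insert Set.sdiff_subset h)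
  exact ht.false_of_two_isolated hn hX hst (hnot s hs) (hnot t hbt) hsc.le htc.le

theorem ncard_bud_le (hG : G.IsKTree k) (hk : 1 ≤ k) (hn : k + 3 ≤ Fintype.card V)
    (ht : G.ToughnessGT ((k : ℝ) / 3)) : (G.bud k v).ncard ≤ k := by
  choose! c hcC hc using fun s (hs : s ∈ G.bud k v) =>
    hv.exists_neighborSet_eq hG hk (by omega) hs
  refine (Set.ncard_le_ncard_of_injOn c hcC fun s hs t hbt hst => ?_).trans_eq hv.2.2.2
  exact hv.eq_of_neighborSet_eq hn ht hs hbt (hcC s hs) (hc s hs) (hst ▸ hc t hbt)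

theorem ncard_bud_le_two (hG : G.IsKTree k) (hk : 1 ≤ k) (hn : k + 3 ≤ Fintype.card V)
    (ht : G.ToughnessGT ((k : ℝ) / 3)) : (G.bud k v).ncard ≤ 2 := by
  rcases le_or_gt k 2 with hk2 | hk2
  · exact (hv.ncard_bud_le hG hk hn ht).trans hk2
  -- Otherwise deleting `N[v] \ S` isolates every bud vertex and leaves a non-neighbour of `v`.
  obtain ⟨w, hwv, hvw⟩ := hv.1
  have hX : (insert v (G.neighborSet v \ G.bud k v)).ncard ≤ k + 1 :=
    (Set.ncard_insert_le _ _).trans (by rw [hv.2.2.2])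
  have hcomp := ht.mul_ncard_add_one_lt (by positivity) hv.2.1
    (Set.disjoint_left.2 fun s hs => notMem_insert_of_mem_bud hs)
    (fun s hs => by
      obtain ⟨c, -, hc⟩ := hv.exists_neighborSet_eq hG hk (by omega) hs
      rw [hc]
      exact Set.insert_subset_insert Set.sdiff_subset)
    (c := w) (fun h => h.elim hwv fun h => hvw h.1) (fun h => hvw h.1)
  have : ((insert v (G.neighborSet v \ G.bud k v)).ncard : ℝ) ≤ k + 1 := by exact_mod_cast hX
  by_contra! h3
  have : (3 : ℝ) ≤ k := by exact_mod_cast hk2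
  have : (3 : ℝ) ≤ (G.bud k v).ncard := by exact_mod_cast h3
  nlinarith

theorem isSqueeze (hG : G.IsKTree k) (hn : k + 3 ≤ Fintype.card V)
    (ht : G.ToughnessGT ((k : ℝ) / 3)) (hk2 : 2 ≤ k) : G.IsSqueeze v (G.bud k v) := by
  set C := G.neighborSet v \ G.bud k v
  refine ⟨fun s hs => hs.1, (Set.ncard_pos).2 hv.2.1,
    hv.ncard_bud_le_two hG (by omega) hn ht, by rw [hv.2.2.2]; exact hk2,
    fun s hs => ?_, fun r hr => ?_⟩
  · obtain ⟨c, hc, hsc⟩ := hv.exists_neighborSet_eq hG (by omega) (by omega) hs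
    have : C ∩ G.neighborSet s = C \ {c} := by
      rw [hsc, Set.inter_insert_of_notMem fun h => G.ne_of_adj h.1 rfl,
        Set.inter_eq_right.2 Set.sdiff_subset]
    rw [this, Set.ncard_sdiff_singleton_of_mem hc]
  · -- Two bud vertices missing `r` would have the same neighbourhood.
    have hN : ∀ u ∈ G.bud k v, ¬ G.Adj r u → G.neighborSet u = insert v (C \ {r}) := by
      intro u hu hur
      obtain ⟨c, -, huc⟩ := hv.exists_neighborSet_eq hG (by omega) (by omega) hu
      obtain rfl : r = c := by
        by_contra hrc
        have : r ∈ G.neighborSet u := by rw [huc]; exact Set.mem_insert_of_mem _ ⟨hr, hrc⟩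
        exact hur this.symm
      exact huc
    have hsub : (G.bud k v \ G.neighborSet r).Subsingleton := fun s ⟨hs, hsr⟩ t ⟨hbt, htr⟩ =>
      hv.eq_of_neighborSet_eq hn ht hs hbt hr (hN s hs hsr) (hN t hbt htr)
    have := Set.ncard_inter_add_ncard_sdiff_eq_ncard (G.bud k v) (G.neighborSet r)
    have := Set.ncard_le_one_iff_subsingleton.2 hsub
    omega

end IsTwig

end SimpleGraph

open scoped Classical in
theorem ktree_has_twig_and_bud_removal {V : Type*} [Fintype V] (k : ℕ) (hk : 1 ≤ k)
    (G : SimpleGraph V) (hcard : k + 3 ≤ Fintype.card V) (hG : G.IsKTree k)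
    (htough : G.ToughnessGT ((k : ℝ) / 3)) :
    (∃ v, G.IsTwig k v) ∧
      ∀ v, G.IsTwig k v →
        (G.induce (G.bud k v)ᶜ).IsKTree k ∧
        (G.induce (G.bud k v)ᶜ).ToughnessGT ((k : ℝ) / 3) ∧
        (2 ≤ k → G.IsSqueeze v (G.bud k v)) := by
  refine ⟨hG.exists_isTwig hk hcard htough, fun v hv => ⟨?_, ?_, hv.isSqueeze hG hcard htough⟩⟩
  · have := hv.ncard_bud_le_two hG hk hcard htough
    exact hG.induce_compl (fun s hs => hs.2) (by omega)
  · exact htough.induce_compl (by positivity) (hG.isIndepSet_bud hk (by omega) v)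
      fun s hs => hG.isClique_neighborSet (by omega) hs.2
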